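/- Consider the deterministic two-cycle Markov chain on S = {1,...,d} in which state d transitions with probability 1/2 to state 1 (long cycle) and with probability 1/2 to state d-q (short cycle, where 1 ≤ q < d-2), every other state x transitions deterministically to x+1, and emissions are deterministic: states 1 and d emit Z = 1 and all other states emit Z = 0. Then the nonlinear filter π_t(·) = P(X_t = · | Z_{1:t}), initialized at a point mass on any state, is at every time t either a point mass on a single state or the uniform mixture (1/2)(δ_1 + δ_{d-q}), and the latter occurs exactly at time steps immediately following a visit to state d. -/

import Mathlib

open Finset

/-- Transition matrix of the two-cycle chain on states `{1,…,d}` (represented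
as `Fin d`, with state `k` ↔ index `k-1`): state `d` branches with probability
`1/2` to state `1` and to state `d-q`; every other state moves to its successor. -/
noncomputable def twoCycleA (d q : ℕ) (x y : Fin d) : ℝ :=
  if (x : ℕ) = d - 1 then (if (y : ℕ) = 0 ∨ (y : ℕ) = d - q - 1 then 1 / 2 else 0)
  else if (y : ℕ) = (x : ℕ) + 1 then 1 else 0

/-- Deterministic emissions: states `1` and `d` emit `1`, all others emit `0`. -/
def twoCycleC (d : ℕ) (x : Fin d) (z : Fin 2) : ℝ :=
  if (x : ℕ) = 0 ∨ (x : ℕ) = d - 1 then (if z = 1 then 1 else 0)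
  else (if z = 0 then 1 else 0)

/-- Point mass at `x`. -/
def pointMass (d : ℕ) (x : Fin d) : Fin d → ℝ := fun y => if y = x then 1 else 0

/-- The uniform mixture `(1/2)(δ_1 + δ_{d-q})`. -/
noncomputable def branchMixture (d q : ℕ) : Fin d → ℝ :=
  fun y => if (y : ℕ) = 0 ∨ (y : ℕ) = d - q - 1 then 1 / 2 else 0

/-!
The emission at a point mass is determined, so a point mass on `x` is carried to row `x` of
`A`: the point mass on the successor of `x`, or the mixture `(δ_1 + δ_{d-q})/2` when `x = d`.
In the mixture the two atoms emit different symbols (`d - q` is neither `1` nor `d`), so the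
next observation singles out one atom and the filter collapses to the point mass on its
successor. By induction the filter only takes these two shapes, and the mixture only arises
from the point mass on `d`.
-/

noncomputable def filterStep {S O : Type*} [Fintype S] (A : S → S → ℝ) (C : S → O → ℝ)
    (p : S → ℝ) (z : O) (x' : S) : ℝ :=
  (∑ x, p x * C x z * A x x') / ∑ x, p x * C x z

theorem filterStep_eq_of_forall_ne {S O : Type*} [Fintype S] {A : S → S → ℝ} {C : S → O → ℝ}
    {p : S → ℝ} {z : O} {x₀ : S} (hpos : 0 < ∑ x, p x * C x z)
    (h : ∀ x ≠ x₀, p x * C x z = 0) :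
    filterStep A C p z = A x₀ := by
  have hden : ∑ x, p x * C x z = p x₀ * C x₀ z :=
    sum_eq_single x₀ (fun x _ hx => h x hx) (by simp)
  rw [hden] at hpos
  funext x'
  rw [filterStep, hden,
    sum_eq_single x₀ (fun x _ hx => by rw [h x hx, zero_mul]) (by simp)]
  exact mul_div_cancel_left₀ _ hpos.ne'

theorem pointMass_inj {d : ℕ} {x y : Fin d} : pointMass d x = pointMass d y ↔ x = y := by
  refine ⟨fun h => ?_, congrArg _⟩
  by_contra hxy
  simpa [pointMass, hxy] using congrFun h x

theorem branchMixture_ne_pointMass (d q : ℕ) (x : Fin d) : branchMixture d q ≠ pointMass d x := by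
  intro h
  have hx := congrFun h x
  simp only [branchMixture, pointMass] at hx
  split_ifs at hx <;> norm_num at hx

theorem filterStep_pointMass {d : ℕ} {A : Fin d → Fin d → ℝ} {O : Type*} {C : Fin d → O → ℝ}
    {z : O} {x₀ : Fin d} (hpos : 0 < ∑ x, pointMass d x₀ x * C x z) :
    filterStep A C (pointMass d x₀) z = A x₀ :=
  filterStep_eq_of_forall_ne hpos fun x hx => by simp [pointMass, hx]

section TwoCycle

variable {d q : ℕ}

theorem twoCycleA_of_ne_last {x : Fin d} (hx : (x : ℕ) ≠ d - 1) :
    twoCycleA d q x = pointMass d ⟨x + 1, by omega⟩ := by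
  funext y
  simp [twoCycleA, pointMass, Fin.ext_iff, hx]

theorem twoCycleA_eq_branchMixture_iff (x : Fin d) :
    twoCycleA d q x = branchMixture d q ↔ (x : ℕ) = d - 1 := by
  refine ⟨fun h => ?_, fun hx => funext fun y => by simp [twoCycleA, branchMixture, hx]⟩
  by_contra hx
  rw [twoCycleA_of_ne_last hx] at h
  exact branchMixture_ne_pointMass d q _ h.symm

theorem twoCycleA_eq_pointMass_or_branchMixture (x : Fin d) :
    (∃ y, twoCycleA d q x = pointMass d y) ∨ twoCycleA d q x = branchMixture d q := by
  by_cases hx : (x : ℕ) = d - 1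
  · exact .inr ((twoCycleA_eq_branchMixture_iff x).2 hx)
  · exact .inl ⟨_, twoCycleA_of_ne_last hx⟩

/-- The two atoms `1` and `d - q` of the mixture emit `1` and `0` respectively, so every
observation is consistent with exactly one of them. -/
theorem exists_branchMixture_atom (hq1 : 1 ≤ q) (hq2 : q < d - 2) (z : Fin 2) :
    ∃ x₀ : Fin d, (x₀ : ℕ) ≠ d - 1 ∧
      ∀ x ≠ x₀, branchMixture d q x * twoCycleC d x z = 0 := by
  fin_cases z
  · refine ⟨⟨d - q - 1, by omega⟩, by dsimp only; omega, fun x hx => ?_⟩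
    have hx' : (x : ℕ) ≠ d - q - 1 := fun h => hx (Fin.ext h)
    by_cases h0 : (x : ℕ) = 0 <;> simp [branchMixture, twoCycleC, h0, hx']
  · refine ⟨⟨0, by omega⟩, by dsimp only; omega, fun x hx => ?_⟩
    have hx' : (x : ℕ) ≠ 0 := fun h => hx (Fin.ext h)
    by_cases h1 : (x : ℕ) = d - q - 1
    · have hC : ¬((x : ℕ) = 0 ∨ (x : ℕ) = d - 1) := by omega
      simp [twoCycleC, hC]
    · simp [branchMixture, h1, hx']

theorem exists_filterStep_branchMixture_eq_pointMass (hq1 : 1 ≤ q) (hq2 : q < d - 2)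
    {z : Fin 2} (hpos : 0 < ∑ x, branchMixture d q x * twoCycleC d x z) :
    ∃ y, filterStep (twoCycleA d q) (twoCycleC d) (branchMixture d q) z = pointMass d y := by
  obtain ⟨x₀, hx₀, h⟩ := exists_branchMixture_atom hq1 hq2 z
  exact ⟨_, (filterStep_eq_of_forall_ne hpos h).trans (twoCycleA_of_ne_last hx₀)⟩

end TwoCycle

/-- for the two-cycle HMM, the nonlinear filter initialized at a
point mass is at every time either a point mass or the mixture
`(1/2)(δ_1 + δ_{d-q})`, and the mixture occurs exactly at the time steps
immediately following a visit to state `d`. -/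
theorem two_cycle_filter_structure (d q : ℕ) (hq1 : 1 ≤ q) (hq2 : q < d - 2)
    (π : ℕ → Fin d → ℝ) (z : ℕ → Fin 2)
    (hinit : ∃ x0 : Fin d, π 0 = pointMass d x0)
    (hfilter : ∀ t,
      (0 < ∑ x, π t x * twoCycleC d x (z (t + 1))) ∧
      ∀ x', π (t + 1) x' =
        (∑ x, π t x * twoCycleC d x (z (t + 1)) * twoCycleA d q x x') /
          ∑ x, π t x * twoCycleC d x (z (t + 1))) :
    (∀ t, (∃ x, π t = pointMass d x) ∨ π t = branchMixture d q) ∧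
    (∀ t, π (t + 1) = branchMixture d q ↔
      π t = pointMass d ⟨d - 1, by omega⟩) := by
  have hpos t := (hfilter t).1
  have hstep t : π (t + 1) = filterStep (twoCycleA d q) (twoCycleC d) (π t) (z (t + 1)) :=
    funext (hfilter t).2
  have hshape t : (∃ x, π t = pointMass d x) ∨ π t = branchMixture d q := by
    induction t with
    | zero => exact .inl hinit
    | succ t ih =>
      rcases ih with ⟨x, hx⟩ | hx <;> rw [hstep, hx]
      · rw [filterStep_pointMass (hx ▸ hpos t)]
        exact twoCycleA_eq_pointMass_or_branchMixture x
      · exact .inl (exists_filterStep_branchMixture_eq_pointMass hq1 hq2 (hx ▸ hpos t))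
  refine ⟨hshape, fun t => ?_⟩
  rcases hshape t with ⟨x, hx⟩ | hx <;> rw [hstep, hx]
  · rw [filterStep_pointMass (hx ▸ hpos t), twoCycleA_eq_branchMixture_iff, pointMass_inj,
      Fin.ext_iff]
  · obtain ⟨y, hy⟩ := exists_filterStep_branchMixture_eq_pointMass hq1 hq2 (hx ▸ hpos t)
    rw [hy]
    exact iff_of_false (branchMixture_ne_pointMass d q y).symm (branchMixture_ne_pointMass d q _)
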